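/- For intuitionistic Kripke models with finite rooted tree frames: if K′ is an a-submodel of K via a relation R (with the submodel conditions), then K′ is an a-submodel of K via a function f (a p-morphism-style embedding). -/
import Mathlib


inductive Fm : Type
  | bot : Fm
  | atom : ℕ → Fm
  | and : Fm → Fm → Fm
  | or : Fm → Fm → Fm
  | imp : Fm → Fm → Fm
deriving DecidableEq

namespace Fm

def neg (A : Fm) : Fm := A.imp .bot
def top : Fm := Fm.bot.imp .bot
def iff (A B : Fm) : Fm := (A.imp B).and (B.imp A)

def subst (θ : ℕ → Fm) : Fm → Fm
  | bot => bot
  | atom n => θ n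
  | and A B => (A.subst θ).and (B.subst θ)
  | or A B => (A.subst θ).or (B.subst θ)
  | imp A B => (A.subst θ).imp (B.subst θ)

def atoms : Fm → Finset ℕ
  | bot => ∅
  | atom n => {n}
  | and A B => A.atoms ∪ B.atoms
  | or A B => A.atoms ∪ B.atoms
  | imp A B => A.atoms ∪ B.atoms

/-- maximal nesting of implications in the left/overall: `c→`. -/
def cimp : Fm → ℕ
  | bot => 0
  | atom _ => 0
  | and A B => max A.cimp B.cimp
  | or A B => max A.cimp B.cimp
  | imp A B => 1 + max A.cimp B.cimp

end Fm

def bigAndL (l : List Fm) : Fm := l.foldr Fm.and Fm.top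
def bigOrL (l : List Fm) : Fm := l.foldr Fm.or Fm.bot

/-- nonempty disjunction -/
def bigOrNE : Fm → List Fm → Fm
  | A, [] => A
  | A, B :: l => A.or (bigOrNE B l)

/-- Hilbert-style intuitionistic propositional calculus. -/
inductive IPC : Fm → Prop
  | imp_k (A B : Fm) : IPC (A.imp (B.imp A))
  | imp_s (A B C : Fm) : IPC ((A.imp (B.imp C)).imp ((A.imp B).imp (A.imp C)))
  | and_intro (A B : Fm) : IPC (A.imp (B.imp (A.and B)))
  | and_left (A B : Fm) : IPC ((A.and B).imp A)
  | and_right (A B : Fm) : IPC ((A.and B).imp B)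
  | or_inl (A B : Fm) : IPC (A.imp (A.or B))
  | or_inr (A B : Fm) : IPC (B.imp (A.or B))
  | or_elim (A B C : Fm) : IPC ((A.imp C).imp ((B.imp C).imp ((A.or B).imp C)))
  | exfalso (A : Fm) : IPC (Fm.bot.imp A)
  | mp {A B : Fm} : IPC (A.imp B) → IPC A → IPC B

/-- Γ-preservativity in the logic T : `A ⊳_{T,Γ} B`. -/
def Pres (T : Fm → Prop) (Γ : Set Fm) (A B : Fm) : Prop :=
  ∀ E ∈ Γ, T (E.imp A) → T (E.imp B)

/-- substitutions are identity on the parameters. -/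
def IdOnPar (par : Finset ℕ) (θ : ℕ → Fm) : Prop :=
  ∀ p ∈ par, θ p = Fm.atom p

/-- implication-free formulas. -/
inductive NI : Fm → Prop
  | bot : NI .bot
  | atom (n : ℕ) : NI (.atom n)
  | and {A B : Fm} : NI A → NI B → NI (A.and B)
  | or {A B : Fm} : NI A → NI B → NI (A.or B)

/-- No Nested Implications in the Left. -/
inductive NNIL : Fm → Prop
  | bot : NNIL .bot
  | atom (n : ℕ) : NNIL (.atom n)
  | and {A B : Fm} : NNIL A → NNIL B → NNIL (A.and B)
  | or {A B : Fm} : NNIL A → NNIL B → NNIL (A.or B)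
  | imp {A B : Fm} : NI A → NNIL B → NNIL (A.imp B)

def IPCPrime (A : Fm) : Prop :=
  ∀ B C, IPC (A.imp (B.or C)) → IPC (A.imp B) ∨ IPC (A.imp C)

/-- T-components: `⋀Γ ∧ ⋀Δ`, Γ atoms, Δ implications with atomic
antecedents not T-provable from Γ. -/
def IsComponentOver (T : Fm → Prop) (B : Fm) : Prop :=
  ∃ (as : List ℕ) (imps : List (ℕ × Fm)),
    B = (bigAndL (as.map Fm.atom)).and
          (bigAndL (imps.map fun p => (Fm.atom p.1).imp p.2)) ∧
    ∀ p ∈ imps, ¬ T ((bigAndL (as.map Fm.atom)).imp (Fm.atom p.1))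

structure KModel : Type 1 where
  W : Type
  le : W → W → Prop
  val : W → ℕ → Prop

namespace KModel

def force (K : KModel) : Fm → K.W → Prop
  | .bot, _ => False
  | .atom n, w => K.val w n
  | .and A B, w => K.force A w ∧ K.force B w
  | .or A B, w => K.force A w ∨ K.force B w
  | .imp A B, w => ∀ u, K.le w u → K.force A u → K.force B u

def IsIPC (K : KModel) : Prop :=
  (∀ w, K.le w w) ∧ (∀ {w u v}, K.le w u → K.le u v → K.le w v) ∧
  (∀ {w u}, K.le w u → K.le u w → w = u) ∧
  (∀ {w u} (a : ℕ), K.le w u → K.val w a → K.val u a)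

def Rooted (K : KModel) : Prop := ∃ r, ∀ w, K.le r w

def Tree (K : KModel) : Prop :=
  ∀ w, {u | K.le u w}.Finite ∧
    ∀ u v, K.le u w → K.le v w → K.le u v ∨ K.le v u

/-- finite rooted tree intuitionistic Kripke model. -/
def IsFRT (K : KModel) : Prop := K.IsIPC ∧ Finite K.W ∧ K.Rooted ∧ K.Tree

end KModel

/-- θ(K): same frame, valuation given by forcing of θ(a). -/
def substModel (θ : ℕ → Fm) (K : KModel) : KModel :=
  ⟨K.W, K.le, fun w a => K.force (θ a) w⟩

/-- disjoint sum of a family of models with a fresh root `none`,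
whose valuation at the root is `V0`. -/
def sumModel {ι : Type} (M : ι → KModel) (V0 : ℕ → Prop) : KModel where
  W := Option (Σ i, (M i).W)
  le := fun x y =>
    x = none ∨ ∃ i w u, x = some ⟨i, w⟩ ∧ y = some ⟨i, u⟩ ∧ (M i).le w u
  val := fun x a => match x with
    | none => V0 a
    | some ⟨i, w⟩ => (M i).val w a

/-- A is extendible: any finite family of (finite rooted tree) models of A
can be summed with a fresh root whose valuation (monotonely chosen)
can be arranged so that the sum is again a model of A. -/
def Extendible (A : Fm) : Prop :=
  ∀ (ι : Type), Finite ι → ∀ (M : ι → KModel),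
    (∀ i, (M i).IsFRT ∧ ∀ w, (M i).force A w) →
    ∃ V0 : ℕ → Prop, (∀ a, V0 a → ∀ i w, (M i).val w a) ∧
      ∀ w, (sumModel M V0).force A w

section AuxStmt12

lemma exists_max_fin {α : Type} (le : α → α → Prop)
    (htrans : ∀ {a b c}, le a b → le b c → le a c)
    (s : Finset α) (hs : s.Nonempty)
    (hlin : ∀ u ∈ s, ∀ v ∈ s, le u v ∨ le v u) :
    ∃ p ∈ s, ∀ u ∈ s, le u p := by
  classical
  induction s using Finset.induction_on with
  | empty => exact absurd hs (by simp)
  | @insert a t ha ih =>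
    by_cases ht : t.Nonempty
    · obtain ⟨p, hp, hmax⟩ := ih ht
        (fun u hu v hv => hlin u (Finset.mem_insert_of_mem hu) v (Finset.mem_insert_of_mem hv))
      rcases hlin a (Finset.mem_insert_self a t) p (Finset.mem_insert_of_mem hp) with h | h
      · exact ⟨p, Finset.mem_insert_of_mem hp, fun u hu => by
          rcases Finset.mem_insert.mp hu with rfl | hu
          · exact h
          · exact hmax u hu⟩
      · exact ⟨a, Finset.mem_insert_self a t, fun u hu => by
          rcases Finset.mem_insert.mp hu with rfl | hu
          · rcases hlin u hu u hu with h' | h' <;> exact h'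
          · exact htrans (hmax u hu) h⟩
    · rw [Finset.not_nonempty_iff_eq_empty] at ht
      subst ht
      refine ⟨a, Finset.mem_insert_self a ∅, fun u hu => ?_⟩
      rcases Finset.mem_insert.mp hu with rfl | hu
      · rcases hlin u hu u hu with h' | h' <;> exact h'
      · simp at hu

open Classical in
noncomputable def stepF (K' K : KModel) (R : K'.W → K.W → Prop)
    (htot : ∀ w', ∃ w, R w' w) (w' : K'.W) (w : K.W) : K.W :=
  if h : ∃ v, R w' v ∧ K.le w v then h.choose else (htot w').choose

lemma stepF_R (K' K : KModel) (R : K'.W → K.W → Prop)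
    (htot : ∀ w', ∃ w, R w' w) (w' : K'.W) (w : K.W) :
    R w' (stepF K' K R htot w' w) := by
  unfold stepF
  split_ifs with h
  · exact h.choose_spec.1
  · exact (htot w').choose_spec

lemma stepF_le (K' K : KModel) (R : K'.W → K.W → Prop)
    (htot : ∀ w', ∃ w, R w' w) (w' : K'.W) (w : K.W)
    (h : ∃ v, R w' v ∧ K.le w v) :
    K.le w (stepF K' K R htot w' w) := by
  unfold stepF
  rw [dif_pos h]
  exact h.choose_spec.2

noncomputable def gAux (K' K : KModel) (R : K'.W → K.W → Prop)
    (htot : ∀ w', ∃ w, R w' w) (pred : K'.W → Option K'.W) :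
    ℕ → K'.W → K.W
  | 0, w' => (htot w').choose
  | n+1, w' =>
    match pred w' with
    | none => (htot w').choose
    | some p => stepF K' K R htot w' (gAux K' K R htot pred n p)

lemma gAux_R (K' K : KModel) (R : K'.W → K.W → Prop)
    (htot : ∀ w', ∃ w, R w' w) (pred : K'.W → Option K'.W) :
    ∀ n w', R w' (gAux K' K R htot pred n w') := by
  intro n
  induction n with
  | zero => intro w'; exact (htot w').choose_spec
  | succ n ih =>
    intro w'
    cases hp : pred w' with
    | none => simp only [gAux, hp]; exact (htot w').choose_spec
    | some p => simp only [gAux, hp]; exact stepF_R K' K R htot w' _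

end AuxStmt12

theorem stmt_12 (abold : Set ℕ) (K' K : KModel)
    (hK' : K'.IsFRT) (hK : K.IsFRT) (R : K'.W → K.W → Prop)
    (hval : ∀ w' w, R w' w → ∀ a ∈ abold, (K'.val w' a ↔ K.val w a))
    (hzig : ∀ w' v' w, K'.le w' v' → R w' w → ∃ v, R v' v ∧ K.le w v)
    (htot : ∀ w', ∃ w, R w' w) :
    ∃ f : K'.W → K.W, (∀ w', R w' (f w')) ∧
      ∀ w' v', K'.le w' v' → K.le (f w') (f v') := by
  classical
  obtain ⟨hrefl', htrans', hanti', _⟩ := hK'.1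
  obtain ⟨hreflK, htransK, _, _⟩ := hK.1
  have hfin' : Finite K'.W := hK'.2.1
  have : Fintype K'.W := Fintype.ofFinite _
  have htree := hK'.2.2.2
  -- strict predecessors
  set sp : K'.W → Finset K'.W :=
    fun w' => Finset.univ.filter (fun u => K'.le u w' ∧ u ≠ w') with hsp
  have mem_sp : ∀ u w', u ∈ sp w' ↔ K'.le u w' ∧ u ≠ w' := by
    intro u w'; simp [hsp]
  have hmax : ∀ w', (sp w').Nonempty → ∃ p ∈ sp w', ∀ u ∈ sp w', K'.le u p := by
    intro w' hne
    refine exists_max_fin K'.le (fun {a b c} => htrans') (sp w') hne ?_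
    intro u hu v hv
    exact (htree w').2 u v ((mem_sp u w').mp hu).1 ((mem_sp v w').mp hv).1
  -- predecessor function
  set pred : K'.W → Option K'.W :=
    fun w' => if h : (sp w').Nonempty then some (hmax w' h).choose else none with hpred
  have pred_spec : ∀ w' p, pred w' = some p →
      p ∈ sp w' ∧ ∀ u ∈ sp w', K'.le u p := by
    intro w' p hp
    simp only [hpred] at hp
    split_ifs at hp with h
    obtain ⟨h1, h2⟩ := (hmax w' h).choose_spec
    rw [Option.some.injEq] at hp
    subst hp; exact ⟨h1, h2⟩
  have pred_some : ∀ w', (sp w').Nonempty → ∃ p, pred w' = some p := by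
    intro w' h
    exact ⟨(hmax w' h).choose, by simp [hpred, dif_pos h]⟩
  -- key: sp p = (sp w').erase p when pred w' = some p
  have sp_pred : ∀ w' p, pred w' = some p → sp p = (sp w').erase p := by
    intro w' p hp
    obtain ⟨hpmem, hpmax⟩ := pred_spec w' p hp
    obtain ⟨hple, hpne⟩ := (mem_sp p w').mp hpmem
    ext u
    rw [Finset.mem_erase, mem_sp, mem_sp]
    constructor
    · rintro ⟨hup, hune⟩
      refine ⟨hune, htrans' hup hple, ?_⟩
      rintro rfl
      exact hpne (hanti' hple hup)
    · rintro ⟨hune, huw, hunw⟩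
      exact ⟨hpmax u ((mem_sp u w').mpr ⟨huw, hunw⟩), hune⟩
  have card_pred : ∀ w' p, pred w' = some p → (sp p).card + 1 = (sp w').card := by
    intro w' p hp
    rw [sp_pred w' p hp, Finset.card_erase_of_mem (pred_spec w' p hp).1]
    have : 0 < (sp w').card := Finset.card_pos.mpr ⟨p, (pred_spec w' p hp).1⟩
    omega
  -- the function
  set f : K'.W → K.W := fun w' => gAux K' K R htot pred (sp w').card w' with hf
  have hfR : ∀ w', R w' (f w') := fun w' => gAux_R K' K R htot pred _ w'
  -- step: f p ≤ f w' when pred w' = some p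
  have hstep : ∀ w' p, pred w' = some p → K.le (f p) (f w') := by
    intro w' p hp
    have hc := card_pred w' p hp
    have : f w' = stepF K' K R htot w' (f p) := by
      rw [hf]
      simp only
      rw [← hc]
      simp only [gAux, hp]
    rw [this]
    refine stepF_le K' K R htot w' (f p) ?_
    exact hzig p w' (f p) ((mem_sp p w').mp (pred_spec w' p hp).1).1 (hfR p)
  -- monotonicity by strong induction on card of sp
  have hmono : ∀ m w' v', (sp v').card = m → K'.le w' v' → K.le (f w') (f v') := by
    intro m
    induction m using Nat.strong_induction_on with
    | _ m ih =>
      intro w' v' hcard hle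
      by_cases heq : w' = v'
      · subst heq; exact hreflK (f w')
      · have hmem : w' ∈ sp v' := (mem_sp w' v').mpr ⟨hle, heq⟩
        obtain ⟨p, hp⟩ := pred_some v' ⟨w', hmem⟩
        by_cases hwp : w' = p
        · subst hwp; exact hstep v' w' hp
        · have hw'p : w' ∈ sp p := by
            rw [sp_pred v' p hp, Finset.mem_erase]
            exact ⟨hwp, hmem⟩
          have hcp := card_pred v' p hp
          have hlt : (sp p).card < m := by omega
          have h1 : K.le (f w') (f p) :=
            ih _ hlt w' p rfl ((mem_sp w' p).mp hw'p).1
          exact htransK h1 (hstep v' p hp)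
  exact ⟨f, hfR, fun w' v' hle => hmono (sp v').card w' v' rfl hle⟩
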